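/- arXiv:1602.03553 — 5 statements merged into one kernel-verified Lean document; each statement's English description precedes it below -/
import Mathlib

section
/- For every complex number z with 0 < Re z < 1 and all real a, a' with 0 < a < 1 and 0 < a' < 1, the line integral ∫_{t ∈ ℝ} f_l(a + t·exp(-iπ/4))·exp(-iπ/4) dt equals ∫_{t ∈ ℝ} f_l(a' + t·exp(-iπ/4))·exp(-iπ/4) dt; that is, the integral of f_l along the line of slope -1 through (a,0) is independent of the choice of a in (0,1). -/
/-!
Rotating by `ε = exp(-iπ/4)` turns the line through `a` into the horizontal line
`Im u = a/√2`, so it suffices to move a horizontal line of integration inside the strip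
`0 < Im u < 1/√2`. There `εu` stays off the cut `(-∞, 0]` and off the integers, since
`Re(εu) + Im(εu) = √2 Im u ∈ (0, 1)`, so the rotated integrand is holomorphic. As
`(εu)² = -i u²`, the factor `exp(-πi (εu)²) = exp(-π u²)` decays like `exp(-π (Re u)²)` uniformly
in the strip, while the denominator is at least `1` once `|Re u|` is large. Cauchy's theorem on
long rectangles then moves the line, the vertical sides contributing nothing in the limit.
-/

open MeasureTheory

/-- The left integrand `f_l(w) = w^(-z)·exp(-πi w²)/(exp(πi w) - exp(-πi w))`. -/
noncomputable def fl (z w : ℂ) : ℂ :=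
  w ^ (-z) * Complex.exp (-(Real.pi * Complex.I) * w ^ 2) /
    (Complex.exp (Real.pi * Complex.I * w) - Complex.exp (-(Real.pi * Complex.I) * w))

open Complex Filter Set Topology
open scoped Real

section HorizontalStrip

variable {g : ℂ → ℂ} {φ : ℝ → ℝ} {b b' : ℝ}

lemma integrable_horizontal_line (hg : ContinuousOn g (im ⁻¹' Icc b b')) (hφ : Integrable φ)
    (hdecay : ∀ᶠ x : ℝ in cocompact ℝ, ∀ y ∈ Icc b b', ‖g (x + y * I)‖ ≤ φ x) {c : ℝ}
    (hc : c ∈ Icc b b') : Integrable fun x : ℝ ↦ g (x + c * I) := by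
  have hcont : Continuous fun x : ℝ ↦ g (x + c * I) :=
    hg.comp_continuous (by fun_prop) fun x ↦ by simpa using hc
  refine hcont.locallyIntegrable.integrable_of_isBigO_cocompact ?_ (hφ.integrableAtFilter _)
  exact Asymptotics.IsBigO.of_bound 1 <| hdecay.mono fun x hx ↦
    (hx c hc).trans <| by simpa using le_abs_self (φ x)

lemma tendsto_integral_vertical_segment (hbb : b ≤ b') (hφ0 : Tendsto φ (cocompact ℝ) (𝓝 0))
    (hdecay : ∀ᶠ x : ℝ in cocompact ℝ, ∀ y ∈ Icc b b', ‖g (x + y * I)‖ ≤ φ x) :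
    Tendsto (fun x : ℝ ↦ ∫ y in b..b', g (x + y * I)) (cocompact ℝ) (𝓝 0) := by
  refine squeeze_zero_norm' (a := fun x ↦ φ x * |b' - b|) (hdecay.mono fun x hx ↦ ?_) ?_
  · refine intervalIntegral.norm_integral_le_of_norm_le_const fun y hy ↦ hx y ?_
    rw [uIoc_of_le hbb] at hy
    exact Ioc_subset_Icc_self hy
  · simpa using hφ0.mul_const |b' - b|

theorem integral_horizontal_line_eq (hbb : b ≤ b') (hg : DifferentiableOn ℂ g (im ⁻¹' Icc b b'))
    (hφ : Integrable φ) (hφ0 : Tendsto φ (cocompact ℝ) (𝓝 0))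
    (hdecay : ∀ᶠ x : ℝ in cocompact ℝ, ∀ y ∈ Icc b b', ‖g (x + y * I)‖ ≤ φ x) :
    ∫ x : ℝ, g (x + b * I) = ∫ x : ℝ, g (x + b' * I) := by
  set V : ℝ → ℂ := fun x ↦ ∫ y in b..b', g (x + y * I)
  have hrect (R : ℝ) : (∫ x in -R..R, g (x + b * I)) - ∫ x in -R..R, g (x + b' * I) =
      I • V (-R) - I • V R := by
    have := integral_boundary_rect_eq_zero_of_differentiableOn g (-R + b * I) (R + b' * I) <|
      hg.mono fun u hu ↦ by simpa [uIcc_of_le hbb] using (mem_reProdIm.mp hu).2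
    simp only [add_re, ofReal_re, mul_re, I_re, mul_zero, ofReal_im, I_im, mul_one, sub_self,
      add_zero, add_im, mul_im, zero_add, ← ofReal_neg] at this
    linear_combination this
  have hV := tendsto_integral_vertical_segment hbb hφ0 hdecay
  have hsides : Tendsto (fun R : ℝ ↦ I • V (-R) - I • V R) atTop (𝓝 0) := by
    have := ((hV.comp (tendsto_neg_atTop_atBot.mono_right atBot_le_cocompact)).const_smul I).sub
      ((hV.comp atTop_le_cocompact).const_smul I)
    rwa [smul_zero, sub_zero] at this
  have hedges := (intervalIntegral_tendsto_integral
      (integrable_horizontal_line hg.continuousOn hφ hdecay ⟨le_rfl, hbb⟩)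
      tendsto_neg_atTop_atBot tendsto_id).sub
    (intervalIntegral_tendsto_integral
      (integrable_horizontal_line hg.continuousOn hφ hdecay ⟨hbb, le_rfl⟩)
      tendsto_neg_atTop_atBot tendsto_id)
  simp only [id, hrect] at hedges
  exact sub_eq_zero.mp (tendsto_nhds_unique hedges hsides)

end HorizontalStrip

lemma exp_sub_exp_ne_zero {w : ℂ} (hw : ∀ n : ℤ, w ≠ n) :
    exp (π * I * w) - exp (-(π * I) * w) ≠ 0 := by
  intro h
  obtain ⟨n, hn⟩ := exp_eq_exp_iff_exists_int.mp (sub_eq_zero.mp h)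
  refine hw n (mul_left_cancel₀ (by simp [Real.pi_ne_zero] : 2 * (π : ℂ) * I ≠ 0) ?_)
  linear_combination hn

lemma one_le_norm_exp_sub_exp {w : ℂ} (hw : 1 ≤ |w.im|) :
    1 ≤ ‖exp (π * I * w) - exp (-(π * I) * w)‖ := by
  have hre₁ : (π * I * w).re = -(π * w.im) := by simp
  have hre₂ : (-(π * I) * w).re = π * w.im := by simp
  have hsinh : |‖exp (π * I * w)‖ - ‖exp (-(π * I) * w)‖| = 2 * Real.sinh (π * |w.im|) := by
    rw [norm_exp, norm_exp, hre₁, hre₂, abs_sub_comm, ← abs_of_pos Real.pi_pos, ← abs_mul,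
      ← Real.abs_sinh, abs_of_pos Real.pi_pos, Real.sinh_eq, abs_div, abs_two]
    ring
  calc (1 : ℝ) ≤ 2 * (π * |w.im|) := by nlinarith [Real.pi_gt_three]
    _ ≤ 2 * Real.sinh (π * |w.im|) := by gcongr; exact Real.self_le_sinh_iff.mpr (by positivity)
    _ ≤ _ := hsinh ▸ abs_norm_sub_norm_le _ _

lemma norm_cpow_neg_le {z w : ℂ} (hz : 0 ≤ z.re) {b : ℝ} (hb : 0 < b) (hw : b ≤ ‖w‖) :
    ‖w ^ (-z)‖ ≤ b ^ (-z.re) * Real.exp (π * |z.im|) := by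
  refine (norm_cpow_le w (-z)).trans ?_
  rw [div_eq_mul_inv, ← Real.exp_neg]
  gcongr
  · exact Real.rpow_le_rpow_of_nonpos hb hw (by simpa using hz)
  · simp only [neg_im, mul_neg, neg_neg]
    calc w.arg * z.im ≤ |w.arg| * |z.im| := by rw [← abs_mul]; exact le_abs_self _
      _ ≤ π * |z.im| := by gcongr; exact abs_arg_le_pi w

lemma differentiableAt_fl (z : ℂ) {w : ℂ} (h0 : 0 < w.re + w.im) (h1 : w.re + w.im < 1) :
    DifferentiableAt ℂ (fl z) w := by
  have hslit : w ∈ slitPlane := by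
    rw [mem_slitPlane_iff]
    by_cases him : w.im = 0
    · exact .inl (by linarith)
    · exact .inr him
  have hint (n : ℤ) : w ≠ n := by
    rintro rfl
    simp only [intCast_re, intCast_im, add_zero] at h0 h1
    exact_mod_cast (Int.lt_iff_add_one_le.mp (by exact_mod_cast h0 : (0 : ℤ) < n)).not_gt
      (by exact_mod_cast h1)
  unfold fl
  fun_prop (disch := first | exact hslit | exact exp_sub_exp_ne_zero hint)

section Rotation

local notation "ε" => exp (-(π * I) / 4)

lemma exp_neg_pi_mul_I_div_four : ε = (√2 / 2 : ℝ) * (1 - I) := by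
  have h : -(π * I) / 4 = ((-(π / 4) : ℝ) : ℂ) * I := by push_cast; ring
  rw [h, exp_mul_I, ← ofReal_cos, ← ofReal_sin, Real.cos_neg, Real.sin_neg, Real.cos_pi_div_four,
    Real.sin_pi_div_four]
  push_cast
  ring

lemma re_exp_neg_pi_mul_I_div_four_mul (u : ℂ) : (ε * u).re = √2 / 2 * (u.re + u.im) := by
  rw [exp_neg_pi_mul_I_div_four]; simp; ring

lemma im_exp_neg_pi_mul_I_div_four_mul (u : ℂ) : (ε * u).im = √2 / 2 * (u.im - u.re) := by
  rw [exp_neg_pi_mul_I_div_four]; simp; ring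

lemma exp_neg_pi_mul_I_div_four_sq : ε ^ 2 = -I := by
  rw [← exp_nat_mul, ← exp_neg_pi_div_two_mul_I]; push_cast; ring_nf

lemma norm_exp_neg_pi_mul_I_div_four : ‖ε‖ = 1 := by
  rw [norm_exp]; simp

lemma exp_neg_pi_mul_I_div_four_mul_one_add_I : ε * (1 + I) = √2 := by
  rw [exp_neg_pi_mul_I_div_four]
  push_cast
  linear_combination (-(√2 : ℂ) / 2) * I_sq

lemma integral_comp_add_mul_exp_neg_pi_mul_I_div_four (f : ℂ → ℂ) (a : ℝ) :
    ∫ t : ℝ, f (a + t * ε) = ∫ t : ℝ, f (ε * (t + (a / √2 : ℝ) * I)) := by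
  have hline (t : ℝ) : (a : ℂ) + t * ε = ε * ((t + a / √2 : ℝ) + (a / √2 : ℝ) * I) := by
    have h : ε * ((t + a / √2 : ℝ) + (a / √2 : ℝ) * I) =
        t * ε + (a / √2 : ℝ) * (ε * (1 + I)) := by push_cast; ring
    rw [h, exp_neg_pi_mul_I_div_four_mul_one_add_I, ← ofReal_mul,
      div_mul_cancel₀ a (by positivity), add_comm]
  simp_rw [hline]
  exact integral_add_right_eq_self (fun t : ℝ ↦ f (ε * (t + (a / √2 : ℝ) * I))) (a / √2)

lemma differentiableAt_fl_exp_mul (z : ℂ) {u : ℂ} (h0 : 0 < u.im) (h1 : u.im < 1 / √2) :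
    DifferentiableAt ℂ (fun v ↦ fl z (ε * v) * ε) u := by
  have hsum : (ε * u).re + (ε * u).im = √2 * u.im := by
    rw [re_exp_neg_pi_mul_I_div_four_mul, im_exp_neg_pi_mul_I_div_four_mul]; ring
  have hfl := differentiableAt_fl z (w := ε * u) (by rw [hsum]; positivity)
    (by rw [hsum]; exact (lt_div_iff₀' (by positivity)).mp h1)
  exact (hfl.comp u (differentiableAt_id.const_mul ε)).mul_const ε

lemma norm_fl_exp_mul_le {z : ℂ} (hz : 0 ≤ z.re) {b b' : ℝ} (hb : 0 < b) {u : ℂ}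
    (hbu : b ≤ u.im) (hub : u.im ≤ b') (hu : 1 ≤ |(ε * u).im|) :
    ‖fl z (ε * u)‖ ≤
      b ^ (-z.re) * Real.exp (π * |z.im|) * Real.exp (π * b' ^ 2) * Real.exp (-π * u.re ^ 2) := by
  have hcpow : ‖(ε * u) ^ (-z)‖ ≤ b ^ (-z.re) * Real.exp (π * |z.im|) := by
    refine norm_cpow_neg_le hz hb ?_
    rw [norm_mul, norm_exp_neg_pi_mul_I_div_four, one_mul]
    exact hbu.trans ((le_abs_self _).trans (abs_im_le_norm u))
  have hgauss :
      ‖exp (-(π * I) * (ε * u) ^ 2)‖ ≤ Real.exp (π * b' ^ 2) * Real.exp (-π * u.re ^ 2) := by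
    have hsq : -(π * I) * (ε * u) ^ 2 = -π * u ^ 2 := by
      rw [mul_pow, exp_neg_pi_mul_I_div_four_sq]; linear_combination (π * u ^ 2) * I_sq
    rw [hsq, norm_exp, ← Real.exp_add, Real.exp_le_exp]
    have : u.im ^ 2 ≤ b' ^ 2 := pow_le_pow_left₀ (hb.le.trans hbu) hub 2
    simp only [neg_mul, neg_re, mul_re, ofReal_re, ofReal_im, zero_mul, sub_zero, sq, mul_im]
    nlinarith [Real.pi_pos]
  unfold fl
  rw [norm_div, norm_mul]
  calc _ ≤ ‖(ε * u) ^ (-z)‖ * ‖exp (-(π * I) * (ε * u) ^ 2)‖ :=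
        div_le_self (by positivity) (one_le_norm_exp_sub_exp hu)
    _ ≤ _ := by rw [mul_assoc _ (Real.exp _)]; gcongr

lemma eventually_norm_fl_exp_mul_le {z : ℂ} (hz : 0 ≤ z.re) {b b' : ℝ} (hb : 0 < b) :
    ∀ᶠ x : ℝ in cocompact ℝ, ∀ y ∈ Icc b b', ‖fl z (ε * (x + y * I)) * ε‖ ≤
      b ^ (-z.re) * Real.exp (π * |z.im|) * Real.exp (π * b' ^ 2) * Real.exp (-π * x ^ 2) := by
  filter_upwards [tendsto_norm_cocompact_atTop.eventually_ge_atTop (b' + 2)] with x hx y hy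
  rw [Real.norm_eq_abs] at hx
  have him : 1 ≤ |(ε * (x + y * I)).im| := by
    have hyx : 2 ≤ |y - x| := by
      have := abs_sub_abs_le_abs_sub x y
      rw [abs_of_pos (hb.trans_le hy.1), abs_sub_comm] at this
      linarith [hy.2]
    rw [im_exp_neg_pi_mul_I_div_four_mul, abs_mul, abs_of_pos (by positivity : 0 < √2 / 2)]
    have hre : (x + y * I : ℂ).re = x := by simp
    have him : (x + y * I : ℂ).im = y := by simp
    rw [hre, him]
    nlinarith [Real.one_lt_sqrt_two]
  rw [norm_mul, norm_exp_neg_pi_mul_I_div_four, mul_one]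
  simpa using norm_fl_exp_mul_le hz hb (u := x + y * I) (by simpa using hy.1)
    (by simpa using hy.2) him

lemma integral_fl_line_eq_of_le {z : ℂ} (hz : 0 ≤ z.re) {a a' : ℝ} (ha : 0 < a) (haa : a ≤ a')
    (ha' : a' < 1) :
    ∫ t : ℝ, fl z (a + t * ε) * ε = ∫ t : ℝ, fl z (a' + t * ε) * ε := by
  rw [integral_comp_add_mul_exp_neg_pi_mul_I_div_four (fl z · * ε),
    integral_comp_add_mul_exp_neg_pi_mul_I_div_four (fl z · * ε)]
  have hdiff : DifferentiableOn ℂ (fun v ↦ fl z (ε * v) * ε) (im ⁻¹' Icc (a / √2) (a' / √2)) :=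
    fun u hu ↦ (differentiableAt_fl_exp_mul z ((by positivity : 0 < a / √2).trans_le hu.1)
      (hu.2.trans_lt (by gcongr))).differentiableWithinAt
  refine integral_horizontal_line_eq (by gcongr) hdiff
    ((integrable_exp_neg_mul_sq Real.pi_pos).const_mul _) ?_
    (eventually_norm_fl_exp_mul_le hz (b' := a' / √2) (by positivity))
  simpa using (tendsto_rpow_abs_mul_exp_neg_mul_sq_cocompact Real.pi_pos 0).const_mul
    ((a / √2) ^ (-z.re) * Real.exp (π * |z.im|) * Real.exp (π * (a' / √2) ^ 2))

end Rotation

theorem fl_line_integral_independent_general (z : ℂ) (h0 : 0 < z.re)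
    (a a' : ℝ) (ha0 : 0 < a) (ha1 : a < 1) (ha'0 : 0 < a') (ha'1 : a' < 1) :
    (∫ t : ℝ, fl z (a + t * Complex.exp (-(Real.pi * Complex.I) / 4)) *
        Complex.exp (-(Real.pi * Complex.I) / 4)) =
    (∫ t : ℝ, fl z (a' + t * Complex.exp (-(Real.pi * Complex.I) / 4)) *
        Complex.exp (-(Real.pi * Complex.I) / 4)) := by
  rcases le_total a a' with h | h
  · exact integral_fl_line_eq_of_le h0.le ha0 h ha'1
  · exact (integral_fl_line_eq_of_le h0.le ha'0 h ha1).symm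

/-- The integral of `f_l` along the line of slope `-1` through `(a,0)`
(direction `exp(-iπ/4)`) does not depend on the crossing point `a ∈ (0,1)`. -/
theorem fl_line_integral_independent (z : ℂ) (h0 : 0 < z.re) (h1 : z.re < 1)
    (a a' : ℝ) (ha0 : 0 < a) (ha1 : a < 1) (ha'0 : 0 < a') (ha'1 : a' < 1) :
    (∫ t : ℝ, fl z (a + t * Complex.exp (-(Real.pi * Complex.I) / 4)) *
        Complex.exp (-(Real.pi * Complex.I) / 4)) =
    (∫ t : ℝ, fl z (a' + t * Complex.exp (-(Real.pi * Complex.I) / 4)) *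
        Complex.exp (-(Real.pi * Complex.I) / 4)) :=
  fl_line_integral_independent_general z h0 a a' ha0 ha1 ha'0 ha'1
end

section
/- Let z ∈ ℂ with 0 < Re z < 1 and let θ ∈ {3π/4, -π/4}. Then there exist real R > 0 and C > 0 such that for every r ≥ R the function t ↦ f_l(t·exp(iθ)) is integrable on [r, ∞) and ‖∫_r^∞ f_l(t·exp(iθ)) dt‖ ≤ C·r^(-Re z). -/
/-!
On the rays `w = t·e^{iθ}` with `θ ∈ {3π/4, -π/4}` one has `w² = -i t²`, so `exp(-πi w²) = e^{-πt²}`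
is a Gaussian, while `|Im w| = t/√2` keeps `|exp(πi w) - exp(-πi w)| ≥ 2 sinh(π |Im w|) ≥ 1` once
`t ≥ 1`. Together with `|w^{-z}| ≤ t^{-Re z} e^{π |Im z|}` this bounds the integrand on `[r, ∞)` by
`e^{π |Im z|} r^{-Re z} e^{-t}`, whose tail integral is at most `e^{π |Im z|} r^{-Re z}`.
-/

open MeasureTheory

open Complex Real Set

lemma Complex.norm_cpow_le_rpow_mul_exp (w s : ℂ) :
    ‖w ^ s‖ ≤ ‖w‖ ^ s.re * Real.exp (π * |s.im|) := by
  refine (norm_cpow_le w s).trans ?_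
  rw [div_eq_mul_inv, ← Real.exp_neg]
  refine mul_le_mul_of_nonneg_left (Real.exp_le_exp.2 ?_) (by positivity)
  calc -(w.arg * s.im) ≤ |w.arg| * |s.im| := by rw [← abs_mul]; exact neg_le_abs _
    _ ≤ π * |s.im| := by gcongr; exact abs_arg_le_pi w

lemma Complex.one_le_norm_exp_sub_exp_neg {w : ℂ} (hw : 1 ≤ |w.re|) :
    1 ≤ ‖exp w - exp (-w)‖ := by
  have hsinh : Real.exp |w.re| - Real.exp (-|w.re|) ≤ ‖exp w - exp (-w)‖ :=
    calc Real.exp |w.re| - Real.exp (-|w.re|) = |Real.exp w.re - Real.exp (-w.re)| := by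
          rcases abs_cases w.re with ⟨h, _⟩ | ⟨h, _⟩ <;> rw [h]
          · rw [abs_of_nonneg (sub_nonneg.2 (Real.exp_le_exp.2 (by linarith)))]
          · rw [neg_neg, abs_sub_comm,
              abs_of_nonneg (sub_nonneg.2 (Real.exp_le_exp.2 (by linarith)))]
      _ = |‖exp w‖ - ‖exp (-w)‖| := by rw [norm_exp, norm_exp, neg_re]
      _ ≤ ‖exp w - exp (-w)‖ := abs_norm_sub_norm_le _ _
  have h₁ : 2 ≤ Real.exp |w.re| := by linarith [Real.add_one_le_exp |w.re|]
  have h₂ : Real.exp (-|w.re|) ≤ 1 := Real.exp_le_one_iff.2 (by linarith)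
  linarith

lemma one_le_norm_fl_denom {w : ℂ} (hw : 1 ≤ π * |w.im|) :
    1 ≤ ‖exp (π * I * w) - exp (-(π * I) * w)‖ := by
  rw [neg_mul]
  refine one_le_norm_exp_sub_exp_neg (hw.trans_eq ?_)
  simp [abs_neg, abs_of_pos pi_pos]

lemma continuousAt_fl (z : ℂ) {w : ℂ} (hw : 1 ≤ π * |w.im|) : ContinuousAt (fl z) w := by
  have hslit : w ∈ slitPlane := by
    refine Or.inr fun h => ?_
    simp [h] at hw
    linarith
  have hdenom : exp (π * I * w) - exp (-(π * I) * w) ≠ 0 :=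
    norm_pos_iff.1 (one_pos.trans_le (one_le_norm_fl_denom hw))
  exact ((continuousAt_cpow_const hslit).mul (by fun_prop)).div (by fun_prop) hdenom

lemma norm_fl_le (z : ℂ) {w : ℂ} (hw : 1 ≤ π * |w.im|) :
    ‖fl z w‖ ≤ Real.exp (π * |z.im|) * ‖w‖ ^ (-z.re) * ‖exp (-(π * I) * w ^ 2)‖ := by
  rw [fl, norm_div, norm_mul]
  refine (div_le_self (by positivity) (one_le_norm_fl_denom hw)).trans ?_
  have hcpow := norm_cpow_le_rpow_mul_exp w (-z)
  rw [neg_re, neg_im, abs_neg, mul_comm] at hcpow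
  exact mul_le_mul_of_nonneg_right hcpow (norm_nonneg _)

section Ray

variable {u : ℂ}

lemma im_sq_of_sq_eq_neg_I (hu : u ^ 2 = -I) : u.im ^ 2 = 1 / 2 := by
  have hre : u.re * u.re - u.im * u.im = 0 := by simpa [sq] using congrArg re hu
  have him : u.re * u.im + u.im * u.re = -1 := by simpa [sq] using congrArg im hu
  nlinarith

lemma norm_eq_one_of_sq_eq_neg_I (hu : u ^ 2 = -I) : ‖u‖ = 1 := by
  have hsq : ‖u‖ ^ 2 = 1 := by rw [← norm_pow, hu, norm_neg, norm_I]
  nlinarith [norm_nonneg u]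

lemma one_le_pi_mul_abs_im_ofReal_mul (hu : u ^ 2 = -I) {t : ℝ} (ht : 1 ≤ t) :
    1 ≤ π * |((t : ℂ) * u).im| := by
  rw [im_ofReal_mul, ← abs_of_pos pi_pos, ← abs_mul, ← one_le_sq_iff_one_le_abs, mul_pow,
    mul_pow, im_sq_of_sq_eq_neg_I hu]
  have hπ : 9 ≤ π ^ 2 := by nlinarith [pi_gt_three]
  have ht2 : 1 ≤ t ^ 2 := by nlinarith
  nlinarith

lemma norm_exp_neg_pi_I_mul_sq (hu : u ^ 2 = -I) (t : ℝ) :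
    ‖exp (-(π * I) * ((t : ℂ) * u) ^ 2)‖ = Real.exp (-(π * t ^ 2)) := by
  rw [norm_exp, mul_pow, hu]
  congr 1
  simp [sq]

lemma norm_fl_ofReal_mul_le (hu : u ^ 2 = -I) {z : ℂ} (hz : 0 ≤ z.re) {r t : ℝ} (hr : 1 ≤ r)
    (ht : r ≤ t) :
    ‖fl z (t * u)‖ ≤ Real.exp (π * |z.im|) * r ^ (-z.re) * Real.exp (-t) := by
  refine (norm_fl_le z (one_le_pi_mul_abs_im_ofReal_mul hu (hr.trans ht))).trans ?_
  rw [norm_exp_neg_pi_I_mul_sq hu, norm_mul, norm_eq_one_of_sq_eq_neg_I hu, mul_one,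
    Complex.norm_of_nonneg (by linarith : (0:ℝ) ≤ t)]
  have hpow : t ^ (-z.re) ≤ r ^ (-z.re) := rpow_le_rpow_of_nonpos (by linarith) ht (by linarith)
  have hgauss : Real.exp (-(π * t ^ 2)) ≤ Real.exp (-t) :=
    Real.exp_le_exp.2 (by nlinarith [pi_gt_three])
  gcongr

lemma continuousOn_fl_ofReal_mul (hu : u ^ 2 = -I) (z : ℂ) :
    ContinuousOn (fun t : ℝ => fl z (t * u)) (Ici 1) := fun t ht =>
  ((continuousAt_fl z (one_le_pi_mul_abs_im_ofReal_mul hu ht)).comp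
    (f := fun t : ℝ => (t : ℂ) * u) (by fun_prop)).continuousWithinAt

end Ray

lemma exp_mul_I_sq_eq_neg_I {θ : ℝ} (hθ : θ = 3 * π / 4 ∨ θ = -(π / 4)) :
    exp (θ * I) ^ 2 = -I := by
  rw [← Complex.exp_nat_mul]
  rcases hθ with rfl | rfl
  · rw [show ((2 : ℕ) : ℂ) * ((3 * π / 4 : ℝ) * I) = -π / 2 * I + 2 * π * I by push_cast; ring,
      Complex.exp_add, exp_two_pi_mul_I, mul_one, exp_neg_pi_div_two_mul_I]
  · rw [show ((2 : ℕ) : ℂ) * ((-(π / 4) : ℝ) * I) = -π / 2 * I by push_cast; ring,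
      exp_neg_pi_div_two_mul_I]

section ExpDecay

lemma integrableOn_Ici_const_mul_exp_neg (K r : ℝ) :
    IntegrableOn (fun t => K * Real.exp (-t)) (Ici r) :=
  ((integrableOn_Ici_iff_integrableOn_Ioi).2 (integrableOn_exp_neg_Ioi r)).const_mul K

variable {E : Type*} [NormedAddCommGroup E] {f : ℝ → E} {r K : ℝ}

lemma integrableOn_Ici_of_norm_le_mul_exp_neg (hf : ContinuousOn f (Ici r))
    (hb : ∀ t ∈ Ici r, ‖f t‖ ≤ K * Real.exp (-t)) : IntegrableOn f (Ici r) :=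
  (integrableOn_Ici_const_mul_exp_neg K r).mono' (hf.aestronglyMeasurable measurableSet_Ici)
    ((ae_restrict_iff' measurableSet_Ici).2 (Filter.Eventually.of_forall hb))

lemma norm_integral_Ici_le_of_norm_le_mul_exp_neg [NormedSpace ℝ E]
    (hb : ∀ t ∈ Ici r, ‖f t‖ ≤ K * Real.exp (-t)) :
    ‖∫ t in Ici r, f t‖ ≤ K * Real.exp (-r) := by
  calc ‖∫ t in Ici r, f t‖ ≤ ∫ t in Ici r, K * Real.exp (-t) :=
        norm_integral_le_of_norm_le (integrableOn_Ici_const_mul_exp_neg K r)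
          ((ae_restrict_iff' measurableSet_Ici).2 (Filter.Eventually.of_forall hb))
    _ = K * Real.exp (-r) := by
        rw [integral_Ici_eq_integral_Ioi, integral_const_mul, integral_exp_neg_Ioi]

end ExpDecay

theorem fl_tail_integral_bound_general (z : ℂ) (h0 : 0 < z.re)
    (θ : ℝ) (hθ : θ = 3 * Real.pi / 4 ∨ θ = -(Real.pi / 4)) :
    ∃ R > (0 : ℝ), ∃ C > (0 : ℝ), ∀ r : ℝ, R ≤ r →
      IntegrableOn (fun t : ℝ => fl z (t * Complex.exp (θ * Complex.I))) (Set.Ici r) ∧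
      ‖∫ t in Set.Ici r, fl z (t * Complex.exp (θ * Complex.I))‖ ≤ C * r ^ (-z.re) := by
  have hu := exp_mul_I_sq_eq_neg_I hθ
  refine ⟨1, one_pos, Real.exp (π * |z.im|), Real.exp_pos _, fun r hr => ?_⟩
  have hb : ∀ t ∈ Ici r, ‖fl z (t * exp (θ * I))‖ ≤
      Real.exp (π * |z.im|) * r ^ (-z.re) * Real.exp (-t) :=
    fun t ht => norm_fl_ofReal_mul_le hu h0.le hr ht
  refine ⟨integrableOn_Ici_of_norm_le_mul_exp_neg
    ((continuousOn_fl_ofReal_mul hu z).mono (Ici_subset_Ici.2 hr)) hb, ?_⟩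
  refine (norm_integral_Ici_le_of_norm_le_mul_exp_neg hb).trans ?_
  exact mul_le_of_le_one_right (by positivity) (Real.exp_le_one_iff.2 (by linarith))

/-- Finiteness of the far parts of the left contour (paper's Lemma 2.2): along the
rays at angles `3π/4` and `-π/4`, the tail integrals of `f_l` exist and are bounded
by `C·r^(-Re z)`. -/
theorem fl_tail_integral_bound (z : ℂ) (h0 : 0 < z.re) (h1 : z.re < 1)
    (θ : ℝ) (hθ : θ = 3 * Real.pi / 4 ∨ θ = -(Real.pi / 4)) :
    ∃ R > (0 : ℝ), ∃ C > (0 : ℝ), ∀ r : ℝ, R ≤ r →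
      IntegrableOn (fun t : ℝ => fl z (t * Complex.exp (θ * Complex.I))) (Set.Ici r) ∧
      ‖∫ t in Set.Ici r, fl z (t * Complex.exp (θ * Complex.I))‖ ≤ C * r ^ (-z.re) :=
  fl_tail_integral_bound_general z h0 θ hθ
end

section
/- Let z ∈ ℂ with 0 < Re z < 1, let θ ∈ {3π/4, -π/4}, and let r_m be a real number with 0 < r_m. Then the function r₁ ↦ r₁^(Re z) · ‖∫_{r₁}^{r_m} f_l(t·exp(iθ))·exp(iθ) dt‖ tends to exp(θ·Im z)/(2π·‖z‖) as r₁ → 0⁺ (limit within (0, r_m)); in particular this limit is positive, so the straight-line integral diverges like r₁^(-Re z) as r₁ → 0. -/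
/-!
On the ray `w = t e^{iθ}`, which avoids the real zeros of the denominator, principal powers split
as `(t e^{iθ})^s = t^s e^{iθs}`, so `f_l(w) e^{iθ} = t^{-z-1} e^{-izθ} g(w)` with
`g(w) = w e^{-πiw²}/(e^{πiw} - e^{-πiw}) = 1/(2πi) + O(w)`. The integrand is therefore
`c t^{-z-1}` plus an error `O(t^{-Re z})`, integrable at `0` because `Re z < 1`. The main term
integrates exactly: `r^z ∫_r^{r_m} c t^{-z-1} dt = c/z - (c r_m^{-z}/z) r^z → c/z`, while `r^z`
times the bounded error integral tends to `0`. Finally `‖c/z‖ = e^{θ Im z}/(2π‖z‖)`.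
-/

open Filter

open Complex MeasureTheory Set Topology
open scoped Interval Real

noncomputable def flRegular (w : ℂ) : ℂ :=
  w * exp (-(π * I) * w ^ 2) / (exp (π * I * w) - exp (-(π * I) * w))

lemma fl_eq_cpow_mul_flRegular (z : ℂ) {w : ℂ} (hw : w ≠ 0) :
    fl z w = w ^ (-z - 1) * flRegular w := by
  rw [fl, flRegular, cpow_sub _ _ hw, cpow_one]
  field_simp

lemma ofReal_mul_exp_cpow {t θ : ℝ} (ht : 0 < t) (hθ : θ ∈ Ioc (-π) π) (s : ℂ) :
    (t * exp (θ * I)) ^ s = (t : ℂ) ^ s * exp (θ * I * s) := by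
  rw [cpow_def_of_ne_zero (mul_ne_zero (ofReal_ne_zero.2 ht.ne') (exp_ne_zero _)),
    log_ofReal_mul ht (exp_ne_zero _), log_exp (by simpa using hθ.1) (by simpa using hθ.2),
    cpow_def_of_ne_zero (ofReal_ne_zero.2 ht.ne'), ← ofReal_log ht.le, add_mul, exp_add]

lemma fl_ofReal_mul_exp_mul_exp {t θ : ℝ} (z : ℂ) (ht : 0 < t)
    (hθ : θ ∈ Ioc (-π) π) :
    fl z (t * exp (θ * I)) * exp (θ * I) =
      (t : ℂ) ^ (-z - 1) * exp (-(z * θ * I)) * flRegular (t * exp (θ * I)) := by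
  have hexp : exp (θ * I * (-z - 1)) * exp (θ * I) = exp (-(z * θ * I)) := by
    rw [← exp_add]; ring_nf
  rw [fl_eq_cpow_mul_flRegular z (mul_ne_zero (ofReal_ne_zero.2 ht.ne') (exp_ne_zero _)),
    ofReal_mul_exp_cpow ht hθ, ← hexp]
  ring

lemma norm_exp_neg_mul_ofReal_mul_I (z : ℂ) (θ : ℝ) :
    ‖exp (-(z * θ * I))‖ = Real.exp (θ * z.im) := by
  rw [norm_exp]
  congr 1
  simp
  ring

lemma exp_sub_exp_neg_ne_zero {w : ℂ} (hw : w.im ≠ 0) :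
    exp (π * I * w) - exp (-(π * I) * w) ≠ 0 := by
  intro h
  obtain ⟨n, hn⟩ := exp_eq_exp_iff_exists_int.1 (sub_eq_zero.1 h)
  have hπI : (2 * π * I : ℂ) ≠ 0 := by simp [Real.pi_ne_zero]
  have : w = n := mul_left_cancel₀ hπI (by linear_combination hn)
  exact hw (by simp [this])

lemma continuousAt_flRegular {w : ℂ} (hw : w.im ≠ 0) : ContinuousAt flRegular w :=
  ContinuousAt.div (by fun_prop) (by fun_prop) (exp_sub_exp_neg_ne_zero hw)

lemma norm_exp_sub_exp_neg_sub_le {a : ℂ} (ha : ‖a‖ ≤ 1) :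
    ‖exp a - exp (-a) - 2 * a‖ ≤ 2 * ‖a‖ ^ 2 :=
  calc ‖exp a - exp (-a) - 2 * a‖ = ‖(exp a - 1 - a) - (exp (-a) - 1 - (-a))‖ := by ring_nf
    _ ≤ ‖exp a - 1 - a‖ + ‖exp (-a) - 1 - (-a)‖ := norm_sub_le _ _
    _ ≤ ‖a‖ ^ 2 + ‖-a‖ ^ 2 :=
      add_le_add (norm_exp_sub_one_sub_id_le ha) (norm_exp_sub_one_sub_id_le (by rwa [norm_neg]))
    _ = 2 * ‖a‖ ^ 2 := by rw [norm_neg]; ring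

lemma norm_flRegular_sub_le {w : ℂ} (hw : w ≠ 0) (hsmall : ‖w‖ ≤ 1 / (2 * π)) :
    ‖flRegular w - 1 / (2 * π * I)‖ ≤ 3 * ‖w‖ := by
  have hπ := Real.pi_pos
  set r := ‖w‖
  have hr : 0 < r := norm_pos_iff.2 hw
  have hπr : π * r ≤ 1 / 2 := by
    rw [le_div_iff₀ (by positivity)] at hsmall; linarith
  have hr1 : r ≤ 1 := by nlinarith [Real.pi_gt_three]
  set a : ℂ := π * I * w
  set b : ℂ := -(π * I) * w ^ 2
  set D : ℂ := exp a - exp (-a)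
  have ha : ‖a‖ = π * r := by simp [a, abs_of_pos hπ, r]
  have hb : ‖b‖ = π * r ^ 2 := by simp [b, abs_of_pos hπ, r]
  have hDa : ‖D - 2 * a‖ ≤ 2 * (π * r) ^ 2 :=
    ha ▸ norm_exp_sub_exp_neg_sub_le (by rw [ha]; linarith)
  have hb1 : ‖exp b - 1‖ ≤ 2 * (π * r ^ 2) :=
    hb ▸ norm_exp_sub_one_le (by rw [hb]; nlinarith)
  -- `D ≈ 2a` and `exp b ≈ 1`: the numerator in `hkey` is `O(r²)`, while `‖D‖ ≥ πr`.
  have hD : π * r ≤ ‖D‖ := by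
    have := norm_sub_norm_le (2 * a) (2 * a - D)
    rw [sub_sub_cancel, norm_sub_rev, norm_mul, ha] at this
    norm_num at this
    nlinarith [mul_le_mul_of_nonneg_left hπr (by positivity : 0 ≤ π * r)]
  have hnum : ‖2 * a * (exp b - 1) - (D - 2 * a)‖ ≤ 6 * π ^ 2 * r ^ 2 := by
    calc _ ≤ ‖2 * a‖ * ‖exp b - 1‖ + ‖D - 2 * a‖ :=
          (norm_sub_le _ _).trans (by rw [norm_mul])
      _ ≤ 2 * (π * r) * (2 * (π * r ^ 2)) + 2 * (π * r) ^ 2 := by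
        rw [norm_mul, ha]; norm_num; gcongr
      _ ≤ 6 * π ^ 2 * r ^ 2 := by
        nlinarith [mul_le_mul_of_nonneg_left hr1 (by positivity : 0 ≤ π ^ 2 * r ^ 2)]
  have hDne : D ≠ 0 := norm_pos_iff.1 (by nlinarith)
  have h2πI : (2 * π * I : ℂ) ≠ 0 := by simp [Real.pi_ne_zero]
  have hkey : flRegular w - 1 / (2 * π * I) =
      (2 * a * (exp b - 1) - (D - 2 * a)) / (2 * π * I * D) := by
    rw [show flRegular w = w * exp b / D by simp only [flRegular, a, b, D, neg_mul],
      div_sub_div _ _ hDne h2πI]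
    simp only [a]
    ring
  rw [hkey, norm_div, div_le_iff₀ (norm_pos_iff.2 (mul_ne_zero h2πI hDne))]
  calc _ ≤ 6 * π ^ 2 * r ^ 2 := hnum
    _ = 3 * r * (2 * π * (π * r)) := by ring
    _ ≤ 3 * r * ‖2 * π * I * D‖ := by
      simp only [norm_mul, norm_I, norm_real, Real.norm_of_nonneg hπ.le]; norm_num; gcongr

lemma exists_norm_le_mul_of_continuousOn_Icc {E : Type*} [NormedAddCommGroup E] {φ : ℝ → E}
    {δ K b : ℝ} (hδ : 0 < δ) (hnear : ∀ t ∈ Ioc 0 δ, ‖φ t‖ ≤ K * t)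
    (hcont : ContinuousOn φ (Icc δ b)) : ∃ M, ∀ t ∈ Ioc 0 b, ‖φ t‖ ≤ M * t := by
  obtain ⟨C, hC⟩ := isCompact_Icc.exists_bound_of_continuousOn hcont
  refine ⟨max K (C / δ), fun t ht => ?_⟩
  rcases le_or_gt t δ with htδ | hδt
  · exact (hnear t ⟨ht.1, htδ⟩).trans (by gcongr; exacts [ht.1.le, le_max_left _ _])
  · have hCt := hC t ⟨hδt.le, ht.2⟩
    have hC0 : 0 ≤ C / δ := div_nonneg ((norm_nonneg _).trans hCt) hδ.le
    calc ‖φ t‖ ≤ C / δ * δ := by rwa [div_mul_cancel₀ _ hδ.ne']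
      _ ≤ max K (C / δ) * t := by gcongr; exact le_max_right _ _

lemma exists_norm_flRegular_ofReal_mul_exp_sub_le {θ : ℝ} (hsin : Real.sin θ ≠ 0) (b : ℝ) :
    ∃ M, ∀ t ∈ Ioc 0 b, ‖flRegular (t * exp (θ * I)) - 1 / (2 * π * I)‖ ≤ M * t := by
  refine exists_norm_le_mul_of_continuousOn_Icc (δ := 1 / (2 * π)) (K := 3)
    (by positivity) (fun t ht => ?_) (fun t ht => ?_)
  · have hnorm : ‖(t : ℂ) * exp (θ * I)‖ = t := by
      rw [norm_mul, norm_exp_ofReal_mul_I, norm_real, Real.norm_of_nonneg ht.1.le, mul_one]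
    simpa only [hnorm] using norm_flRegular_sub_le
      (mul_ne_zero (ofReal_ne_zero.2 ht.1.ne') (exp_ne_zero _)) (hnorm.trans_le ht.2)
  · have ht0 : 0 < t := lt_of_lt_of_le (by positivity) ht.1
    have him : ((t : ℂ) * exp (θ * I)).im ≠ 0 := by
      simpa [exp_ofReal_mul_I_re, exp_ofReal_mul_I_im] using mul_ne_zero ht0.ne' hsin
    exact ((continuousAt_flRegular him).comp
      (f := fun s : ℝ => (s : ℂ) * exp (θ * I)) (by fun_prop)).continuousWithinAt.sub
      continuousWithinAt_const

lemma integrableOn_fl_ofReal_mul_exp_sub {z : ℂ} {θ : ℝ} (hz : z.re < 1)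
    (hθ : θ ∈ Ioc (-π) π) (hsin : Real.sin θ ≠ 0) (b : ℝ) :
    IntegrableOn (fun t : ℝ => fl z (t * exp (θ * I)) * exp (θ * I) -
      exp (-(z * θ * I)) / (2 * π * I) * (t : ℂ) ^ (-z - 1)) (Ioc 0 b) := by
  obtain ⟨M, hM⟩ := exists_norm_flRegular_ofReal_mul_exp_sub_le hsin b
  have hdom : IntegrableOn (fun t : ℝ => t ^ (-z.re)) (Ioc 0 b) :=
    (intervalIntegral.intervalIntegrable_rpow' (by linarith)).1
  refine Integrable.mono' (hdom.const_mul (Real.exp (θ * z.im) * M)) (by unfold fl; fun_prop)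
    ((ae_restrict_iff' measurableSet_Ioc).2 (ae_of_all _ fun t ht => ?_))
  have herr : fl z (t * exp (θ * I)) * exp (θ * I) -
      exp (-(z * θ * I)) / (2 * π * I) * (t : ℂ) ^ (-z - 1) =
      (t : ℂ) ^ (-z - 1) * exp (-(z * θ * I)) *
        (flRegular (t * exp (θ * I)) - 1 / (2 * π * I)) := by
    rw [fl_ofReal_mul_exp_mul_exp z ht.1 hθ]; ring
  rw [herr, norm_mul, norm_mul, norm_cpow_eq_rpow_re_of_pos ht.1,
    norm_exp_neg_mul_ofReal_mul_I]
  calc _ ≤ t ^ (-z - 1).re * Real.exp (θ * z.im) * (M * t) :=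
      mul_le_mul_of_nonneg_left (hM t ht)
        (mul_nonneg (Real.rpow_nonneg ht.1.le _) (Real.exp_pos _).le)
    _ = Real.exp (θ * z.im) * M * (t ^ (-z.re - 1) * t) := by simp; ring
    _ = Real.exp (θ * z.im) * M * t ^ (-z.re) := by
      rw [← Real.rpow_add_one ht.1.ne']; norm_num

lemma tendsto_cpow_mul_integral_of_integrableOn_sub {f : ℝ → ℂ} {z c : ℂ} {b : ℝ}
    (hz : 0 < z.re)
    (hf : IntegrableOn (fun t : ℝ => f t - c * (t : ℂ) ^ (-z - 1)) (Ioc 0 b)) :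
    Tendsto (fun r : ℝ => (r : ℂ) ^ z * ∫ t in r..b, f t)
      (𝓝[Ioo 0 b] 0) (𝓝 (c / z)) := by
  set E : ℝ → ℂ := fun t => f t - c * (t : ℂ) ^ (-z - 1)
  have hz0 : z ≠ 0 := by rintro rfl; simp at hz
  have hpow : Tendsto (fun r : ℝ => (r : ℂ) ^ z) (𝓝[Ioo 0 b] 0) (𝓝 0) := by
    have := (continuousAt_ofReal_cpow_const 0 z (Or.inl hz)).tendsto
    rw [ofReal_zero, zero_cpow hz0] at this
    exact this.mono_left nhdsWithin_le_nhds
  have hsplit : ∀ r ∈ Ioo 0 b, (r : ℂ) ^ z * ∫ t in r..b, f t =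
      c / z - c * (b : ℂ) ^ (-z) / z * (r : ℂ) ^ z + (r : ℂ) ^ z * ∫ t in r..b, E t := by
    intro r hr
    have h0 : (0 : ℝ) ∉ [[r, b]] := by
      rw [uIcc_of_le hr.2.le]; exact fun h => hr.1.not_ge h.1
    have hpowint :=
      intervalIntegral.intervalIntegrable_cpow (μ := volume) (r := -z - 1) (Or.inr h0)
    have hEint : IntervalIntegrable E volume r b :=
      (intervalIntegrable_iff_integrableOn_Ioc_of_le hr.2.le).2
        (hf.mono_set (Ioc_subset_Ioc_left hr.1.le))
    have hf_eq :
        ∫ t in r..b, f t = c * (∫ t in r..b, (t : ℂ) ^ (-z - 1)) + ∫ t in r..b, E t := by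
      rw [← intervalIntegral.integral_const_mul,
        ← intervalIntegral.integral_add (hpowint.const_mul c) hEint]
      simp [E]
    have hne : -z - 1 ≠ -1 := fun h => hz0 (by linear_combination -h)
    have hrr : (r : ℂ) ^ z * (r : ℂ) ^ (-z) = 1 := by
      rw [← cpow_add _ _ (ofReal_ne_zero.2 hr.1.ne')]; simp
    rw [hf_eq, integral_cpow (Or.inr ⟨hne, h0⟩), sub_add_cancel]
    linear_combination (c / z) * hrr
  have hbound : ∀ r ∈ Ioo 0 b, ‖∫ t in r..b, E t‖ ≤ ∫ t in Ioc 0 b, ‖E t‖ := by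
    intro r hr
    calc _ ≤ ∫ t in Ι r b, ‖E t‖ := intervalIntegral.norm_integral_le_integral_norm_uIoc
      _ ≤ ∫ t in Ioc 0 b, ‖E t‖ := by
        rw [uIoc_of_le hr.2.le]
        exact setIntegral_mono_set hf.norm (ae_of_all _ fun _ => norm_nonneg _)
          (Ioc_subset_Ioc_left hr.1.le).eventuallyLE
  have hE :
      Tendsto (fun r : ℝ => (r : ℂ) ^ z * ∫ t in r..b, E t) (𝓝[Ioo 0 b] 0) (𝓝 0) :=
    squeeze_zero_norm' (eventually_nhdsWithin_of_forall fun r hr => (norm_mul_le _ _).trans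
      (mul_le_mul_of_nonneg_left (hbound r hr) (norm_nonneg _)))
      (by simpa using hpow.norm.mul_const (∫ t in Ioc 0 b, ‖E t‖))
  have hlim := ((tendsto_const_nhds (x := c / z)).sub
    (hpow.const_mul (c * (b : ℂ) ^ (-z) / z))).add hE
  rw [mul_zero, sub_zero, add_zero] at hlim
  exact hlim.congr' (eventually_nhdsWithin_of_forall fun r hr => (hsplit r hr).symm)

theorem fl_segment_singularity_general (z : ℂ) (h0 : 0 < z.re) (h1 : z.re < 1)
    (θ : ℝ) (hθ : θ = 3 * Real.pi / 4 ∨ θ = -(Real.pi / 4))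
    (rm : ℝ) :
    Tendsto (fun r₁ : ℝ => r₁ ^ z.re *
        ‖∫ t in r₁..rm, fl z (t * Complex.exp (θ * Complex.I)) *
            Complex.exp (θ * Complex.I)‖)
      (nhdsWithin 0 (Set.Ioo 0 rm))
      (nhds (Real.exp (θ * z.im) / (2 * Real.pi * ‖z‖))) ∧
    0 < Real.exp (θ * z.im) / (2 * Real.pi * ‖z‖) := by
  have hz : z ≠ 0 := by rintro rfl; simp at h0
  have hπ := Real.pi_pos
  have hθ' : θ ∈ Ioc (-π) π ∧ Real.sin θ ≠ 0 := by
    rcases hθ with rfl | rfl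
    · exact ⟨⟨by linarith, by linarith⟩,
        (Real.sin_pos_of_pos_of_lt_pi (by positivity) (by linarith)).ne'⟩
    · refine ⟨⟨by linarith, by linarith⟩, ?_⟩
      rw [Real.sin_neg]
      exact neg_ne_zero.2 (Real.sin_pos_of_pos_of_lt_pi (by positivity) (by linarith)).ne'
  have hlim := tendsto_cpow_mul_integral_of_integrableOn_sub h0
    (integrableOn_fl_ofReal_mul_exp_sub h1 hθ'.1 hθ'.2 rm)
  have hnorm : ‖exp (-(z * θ * I)) / (2 * π * I) / z‖ =
      Real.exp (θ * z.im) / (2 * Real.pi * ‖z‖) := by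
    rw [norm_div, norm_div, norm_exp_neg_mul_ofReal_mul_I, div_div]
    simp [abs_of_pos hπ]
  refine ⟨hnorm ▸ hlim.norm.congr' (eventually_nhdsWithin_of_forall fun r hr => ?_),
    div_pos (Real.exp_pos _) (mul_pos (by positivity) (norm_pos_iff.2 hz))⟩
  rw [norm_mul, norm_cpow_eq_rpow_re_of_pos hr.1]

/-- Paper's Lemma 3.1 (left contour, segments C̃_lp, C̃_ln): along the rays at
angles `3π/4` and `-π/4`, the straight-line integral of `f_l` from `r₁` to `r_m`
diverges like `r₁^(-Re z)` as `r₁ → 0⁺`; more precisely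
`r₁^(Re z)·‖∫_{r₁}^{r_m} f_l(t·e^{iθ})·e^{iθ} dt‖ → exp(θ·Im z)/(2π‖z‖)`,
a positive limit. -/
theorem fl_segment_singularity (z : ℂ) (h0 : 0 < z.re) (h1 : z.re < 1)
    (θ : ℝ) (hθ : θ = 3 * Real.pi / 4 ∨ θ = -(Real.pi / 4))
    (rm : ℝ) (hrm : 0 < rm) :
    Tendsto (fun r₁ : ℝ => r₁ ^ z.re *
        ‖∫ t in r₁..rm, fl z (t * Complex.exp (θ * Complex.I)) *
            Complex.exp (θ * Complex.I)‖)
      (nhdsWithin 0 (Set.Ioo 0 rm))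
      (nhds (Real.exp (θ * z.im) / (2 * Real.pi * ‖z‖))) ∧
    0 < Real.exp (θ * z.im) / (2 * Real.pi * ‖z‖) :=
  fl_segment_singularity_general z h0 h1 θ hθ rm
end

section
/- Let z ∈ ℂ with 0 < Re z < 1, let θ ∈ {π/4, -3π/4}, and let r_m be a real number with 0 < r_m. Then the function r₁ ↦ r₁^(1 - Re z) · ‖∫_{r₁}^{r_m} f_r(t·exp(iθ))·exp(iθ) dt‖ tends to exp(-θ·Im z)/(2π·‖z - 1‖) as r₁ → 0⁺ (limit within (0, r_m)); in particular this limit is positive, so the straight-line integral diverges like r₁^(Re z - 1) as r₁ → 0. -/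
/-!
Writing `exp (π i w²) / (e^{π i w} - e^{-π i w}) = 1 / (2 π i w) + H w` with `H` continuous at `0`
(a removable singularity), the integrand along the ray `w = t e^{iθ}` becomes
`A t^(z-2) + t^(z-1) · (continuous)` with `A = e^{iθ(z-1)} / (2 π i)`; for `θ ∈ (-π, π]` the
principal power splits as `(t e^{iθ})^s = t^s e^{iθ s}`. Since `Re z > 0` the second term is
integrable at `0`, and since `Re z < 1` the first one dominates: `r^(1-z) ∫_r^{r_m} → -A / (z - 1)`.
-/

open Filter

/-- The right integrand `f_r(w) = w^(z-1)·exp(πi w²)/(exp(πi w) - exp(-πi w))`. -/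
noncomputable def fr (z w : ℂ) : ℂ :=
  w ^ (z - 1) * Complex.exp (Real.pi * Complex.I * w ^ 2) /
    (Complex.exp (Real.pi * Complex.I * w) - Complex.exp (-(Real.pi * Complex.I) * w))

open Topology Set MeasureTheory Complex Real

theorem integrableOn_Ioc_ofReal_cpow_mul {s : ℂ} (hs : -1 < s.re) {K : ℝ → ℂ} {b : ℝ}
    (hK : ContinuousOn K (Icc 0 b)) :
    IntegrableOn (fun t : ℝ => (t : ℂ) ^ s * K t) (Ioc 0 b) := by
  have hpow : IntegrableOn (fun t : ℝ => (t : ℂ) ^ s) (Icc 0 b) := by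
    rw [integrableOn_Icc_iff_integrableOn_Ioc]
    exact (intervalIntegral.intervalIntegrable_cpow' hs).1
  exact (hpow.mul_continuousOn hK isCompact_Icc).mono_set Ioc_subset_Icc_self

theorem tendsto_ofReal_cpow_nhdsGT_zero {s : ℂ} (hs : 0 < s.re) :
    Tendsto (fun r : ℝ => (r : ℂ) ^ s) (𝓝[>] 0) (𝓝 0) := by
  have h := (continuous_ofReal_cpow_const hs).tendsto 0
  rw [ofReal_zero, zero_cpow (by rintro rfl; simp at hs)] at h
  exact h.mono_left nhdsWithin_le_nhds

theorem tendsto_intervalIntegral_left_nhdsGT {f : ℝ → ℂ} {a b : ℝ} (hab : a < b)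
    (hf : IntegrableOn f (Ioc a b)) :
    Tendsto (fun r : ℝ => ∫ t in r..b, f t) (𝓝[>] a) (𝓝 (∫ t in a..b, f t)) := by
  have hcont := intervalIntegral.continuousOn_primitive_interval_left (μ := volume) (a := a)
    (b := b) (f := f) (by rwa [uIcc_of_le hab.le, integrableOn_Icc_iff_integrableOn_Ioc])
  rw [uIcc_of_le hab.le] at hcont
  rw [← nhdsWithin_Ioo_eq_nhdsGT hab]
  exact ((hcont a (left_mem_Icc.2 hab.le)).mono Ioo_subset_Icc_self).tendsto

theorem intervalIntegral_eq_cpow_add_of_integrableOn_sub {s A : ℂ} (hs : s ≠ 0) {r b : ℝ}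
    (hr : 0 < r) (hrb : r ≤ b) {g : ℝ → ℂ}
    (hR : IntegrableOn (fun t : ℝ => g t - A * (t : ℂ) ^ (s - 1)) (Ioc r b)) :
    ∫ t in r..b, g t = A * (((b : ℂ) ^ s - (r : ℂ) ^ s) / s) +
      ∫ t in r..b, (g t - A * (t : ℂ) ^ (s - 1)) := by
  have h0 : (0 : ℝ) ∉ uIcc r b := by
    rw [uIcc_of_le hrb]
    exact fun h => hr.not_ge h.1
  have hpow : IntervalIntegrable (fun t : ℝ => A * (t : ℂ) ^ (s - 1)) volume r b :=
    (intervalIntegral.intervalIntegrable_cpow (Or.inr h0)).const_mul A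
  have hsum := intervalIntegral.integral_add hpow
    ((intervalIntegrable_iff_integrableOn_Ioc_of_le hrb).2 hR)
  simp only [add_sub_cancel] at hsum
  rw [hsum, intervalIntegral.integral_const_mul, integral_cpow (Or.inr ⟨by simpa using hs, h0⟩),
    sub_add_cancel]

theorem tendsto_ofReal_cpow_neg_mul_intervalIntegral {s A : ℂ} (hs : s.re < 0) {b : ℝ}
    (hb : 0 < b) {g : ℝ → ℂ}
    (hR : IntegrableOn (fun t : ℝ => g t - A * (t : ℂ) ^ (s - 1)) (Ioc 0 b)) :
    Tendsto (fun r : ℝ => (r : ℂ) ^ (-s) * ∫ t in r..b, g t) (𝓝[>] 0) (𝓝 (-(A / s))) := by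
  set R : ℝ → ℂ := fun t => g t - A * (t : ℂ) ^ (s - 1)
  have hs0 : s ≠ 0 := by rintro rfl; simp at hs
  have hsmall := tendsto_ofReal_cpow_nhdsGT_zero (s := -s) (by simpa using hs)
  have hlim : Tendsto (fun r : ℝ => A * (((b : ℂ) ^ s * (r : ℂ) ^ (-s) - 1) / s) +
      (r : ℂ) ^ (-s) * ∫ t in r..b, R t) (𝓝[>] 0)
      (𝓝 (A * (((b : ℂ) ^ s * 0 - 1) / s) + 0 * ∫ t in (0 : ℝ)..b, R t)) :=
    (((hsmall.const_mul _).sub_const 1).div_const s).const_mul A |>.add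
      (hsmall.mul (tendsto_intervalIntegral_left_nhdsGT hb hR))
  rw [mul_zero, zero_mul, add_zero, zero_sub, neg_div, mul_neg, mul_one_div] at hlim
  refine hlim.congr' ?_
  filter_upwards [Ioo_mem_nhdsGT hb] with r hr
  have hone : (r : ℂ) ^ (-s) * (r : ℂ) ^ s = 1 := by
    rw [← cpow_add _ _ (by exact_mod_cast hr.1.ne')]
    simp
  rw [intervalIntegral_eq_cpow_add_of_integrableOn_sub hs0 hr.1 hr.2.le
    (hR.mono_set (Ioc_subset_Ioc_left hr.1.le))]
  field_simp
  linear_combination A * hone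

noncomputable def frDenom (w : ℂ) : ℂ := exp (π * I * w) - exp (-(π * I) * w)

/-- For `w ≠ 0`, `exp (π i w²) / frDenom w = frRegular w / w`, and `frRegular` is holomorphic
away from the nonzero zeros of `frDenom`. -/
noncomputable def frRegular (w : ℂ) : ℂ := exp (π * I * w ^ 2) / dslope frDenom 0 w

noncomputable def frCorrection : ℂ → ℂ := dslope frRegular 0

theorem frDenom_zero : frDenom 0 = 0 := by simp [frDenom]

theorem differentiable_frDenom : Differentiable ℂ frDenom := by
  unfold frDenom
  fun_prop

theorem hasDerivAt_frDenom_zero : HasDerivAt frDenom (2 * π * I) 0 := by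
  have h := (((hasDerivAt_id (0 : ℂ)).const_mul (π * I)).cexp).sub
    (((hasDerivAt_id (0 : ℂ)).const_mul (-(π * I))).cexp)
  simp only [id, mul_zero, Complex.exp_zero, one_mul, mul_one, sub_neg_eq_add] at h
  rw [show (2 * π * I : ℂ) = π * I + π * I by ring]
  exact h

theorem dslope_frDenom_zero : dslope frDenom 0 0 = 2 * π * I := by
  rw [dslope_same, hasDerivAt_frDenom_zero.deriv]

theorem frDenom_ne_zero_of_im_ne_zero {w : ℂ} (hw : w.im ≠ 0) : frDenom w ≠ 0 := by
  intro h
  rw [frDenom, sub_eq_zero, exp_eq_exp_iff_exists_int] at h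
  obtain ⟨n, hn⟩ := h
  have hwn : w = n :=
    mul_left_cancel₀ (by simp [pi_ne_zero] : (2 * π * I : ℂ) ≠ 0) (by linear_combination hn)
  exact hw (by simp [hwn])

theorem dslope_frDenom_ne_zero {w : ℂ} (hw : w = 0 ∨ w.im ≠ 0) : dslope frDenom 0 w ≠ 0 := by
  rcases hw with rfl | hw
  · rw [dslope_frDenom_zero]
    simp [pi_ne_zero]
  · have hw0 : w ≠ 0 := by rintro rfl; simp at hw
    rw [dslope_of_ne _ hw0, slope_def_field, frDenom_zero, sub_zero, sub_zero]
    exact div_ne_zero (frDenom_ne_zero_of_im_ne_zero hw) hw0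

theorem continuousAt_frCorrection {w : ℂ} (hw : dslope frDenom 0 w ≠ 0) :
    ContinuousAt frCorrection w := by
  have hdenom : Differentiable ℂ (dslope frDenom 0) := by
    rw [← differentiableOn_univ, differentiableOn_dslope univ_mem, differentiableOn_univ]
    exact differentiable_frDenom
  have hreg : DifferentiableAt ℂ frRegular w :=
    (by fun_prop : DifferentiableAt ℂ (fun w : ℂ => exp (π * I * w ^ 2)) w).div (hdenom w) hw
  rcases eq_or_ne w 0 with rfl | hw0
  · exact continuousAt_dslope_same.2 hreg
  · exact (continuousAt_dslope_of_ne hw0).2 hreg.continuousAt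

theorem exp_div_frDenom {w : ℂ} (hw : w ≠ 0) :
    exp (π * I * w ^ 2) / frDenom w = 1 / (2 * π * I * w) + frCorrection w := by
  have hreg0 : frRegular 0 = 1 / (2 * π * I) := by
    rw [frRegular, dslope_frDenom_zero]
    simp
  rw [frCorrection, dslope_of_ne _ hw, slope_def_field, hreg0, frRegular, dslope_of_ne _ hw,
    slope_def_field, frDenom_zero, sub_zero, sub_zero, div_div_eq_mul_div, mul_div_right_comm,
    sub_div, mul_div_cancel_right₀ _ hw]
  ring

theorem ofReal_mul_exp_mul_I_cpow {t θ : ℝ} (ht : 0 < t) (hθ₁ : -π < θ) (hθ₂ : θ ≤ π)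
    (s : ℂ) : ((t : ℂ) * exp (θ * I)) ^ s = (t : ℂ) ^ s * exp (θ * I * s) := by
  have ht0 : (t : ℂ) ≠ 0 := by exact_mod_cast ht.ne'
  have hlog : log ((t : ℂ) * exp (θ * I)) = Real.log t + θ * I := by
    rw [log_ofReal_mul ht (exp_ne_zero _), log_exp (by simpa using hθ₁) (by simpa using hθ₂)]
  rw [cpow_def_of_ne_zero (mul_ne_zero ht0 (exp_ne_zero _)), hlog, cpow_def_of_ne_zero ht0,
    ← ofReal_log ht.le, ← Complex.exp_add]
  ring_nf

theorem fr_ofReal_mul_exp_mul_I {z : ℂ} {t θ : ℝ} (ht : 0 < t) (hθ₁ : -π < θ) (hθ₂ : θ ≤ π) :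
    fr z (t * exp (θ * I)) * exp (θ * I) =
      exp (θ * I * (z - 1)) / (2 * π * I) * (t : ℂ) ^ (z - 2) +
        (t : ℂ) ^ (z - 1) *
          (exp (θ * I * (z - 1)) * exp (θ * I) * frCorrection (t * exp (θ * I))) := by
  have ht0 : (t : ℂ) ≠ 0 := by exact_mod_cast ht.ne'
  have hpow : (t : ℂ) ^ (z - 1) = (t : ℂ) ^ (z - 2) * t := by
    rw [show z - 1 = z - 2 + 1 by ring, cpow_add _ _ ht0, cpow_one]
  rw [fr, mul_div_assoc, ← frDenom, exp_div_frDenom (mul_ne_zero ht0 (exp_ne_zero _)),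
    ofReal_mul_exp_mul_I_cpow ht hθ₁ hθ₂, hpow]
  field_simp

theorem continuous_frCorrection_ofReal_mul_exp_mul_I {θ : ℝ} (hθ : Real.sin θ ≠ 0) :
    Continuous fun t : ℝ => frCorrection (t * exp (θ * I)) := by
  refine continuous_iff_continuousAt.2 fun t => ?_
  refine (continuousAt_frCorrection (dslope_frDenom_ne_zero ?_)).comp (by fun_prop)
  rcases eq_or_ne t 0 with rfl | ht
  · simp
  · right
    simpa [exp_ofReal_mul_I_im] using ⟨ht, hθ⟩

theorem norm_exp_ofReal_mul_I_mul (θ : ℝ) (w : ℂ) :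
    ‖exp (θ * I * w)‖ = Real.exp (-(θ * w.im)) := by
  rw [norm_exp]
  simp

/-- Paper's Lemma 3.1 (right contour, segments C̃_rp, C̃_rn): along the rays at
angles `π/4` and `-3π/4`, the straight-line integral of `f_r` from `r₁` to `r_m`
diverges like `r₁^(Re z - 1)` as `r₁ → 0⁺`; more precisely
`r₁^(1 - Re z)·‖∫_{r₁}^{r_m} f_r(t·e^{iθ})·e^{iθ} dt‖ → exp(-θ·Im z)/(2π‖z-1‖)`,
a positive limit. -/
theorem fr_segment_singularity (z : ℂ) (h0 : 0 < z.re) (h1 : z.re < 1)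
    (θ : ℝ) (hθ : θ = Real.pi / 4 ∨ θ = -(3 * Real.pi / 4))
    (rm : ℝ) (hrm : 0 < rm) :
    Tendsto (fun r₁ : ℝ => r₁ ^ (1 - z.re) *
        ‖∫ t in r₁..rm, fr z (t * Complex.exp (θ * Complex.I)) *
            Complex.exp (θ * Complex.I)‖)
      (nhdsWithin 0 (Set.Ioo 0 rm))
      (nhds (Real.exp (-(θ * z.im)) / (2 * Real.pi * ‖z - 1‖))) ∧
    0 < Real.exp (-(θ * z.im)) / (2 * Real.pi * ‖z - 1‖) := by
  obtain ⟨hθ₁, hθ₂, hsin⟩ : -π < θ ∧ θ ≤ π ∧ Real.sin θ ≠ 0 := by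
    rcases hθ with rfl | rfl
    · exact ⟨by linarith [pi_pos], by linarith [pi_pos], by rw [sin_pi_div_four]; positivity⟩
    · refine ⟨by linarith [pi_pos], by linarith [pi_pos], ?_⟩
      rw [Real.sin_neg, show 3 * π / 4 = π - π / 4 by ring, Real.sin_pi_sub, sin_pi_div_four]
      exact neg_ne_zero.2 (by positivity)
  set c := exp (θ * I)
  set E := exp (θ * I * (z - 1))
  have hrem : IntegrableOn
      (fun t : ℝ => fr z (t * c) * c - E / (2 * π * I) * (t : ℂ) ^ (z - 1 - 1)) (Ioc 0 rm) := by
    refine (integrableOn_Ioc_ofReal_cpow_mul (s := z - 1) (by simpa using h0)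
      ((continuous_frCorrection_ofReal_mul_exp_mul_I hsin).const_mul (E * c)).continuousOn
      ).congr_fun (fun t ht => ?_) measurableSet_Ioc
    rw [fr_ofReal_mul_exp_mul_I ht.1 hθ₁ hθ₂, sub_sub, one_add_one_eq_two]
    ring
  have hlim := (tendsto_ofReal_cpow_neg_mul_intervalIntegral (by simpa using h1) hrm hrem).norm
  rw [← nhdsWithin_Ioo_eq_nhdsGT hrm, norm_neg, norm_div, norm_div,
    norm_exp_ofReal_mul_I_mul] at hlim
  have hz : z - 1 ≠ 0 := sub_ne_zero.2 fun h => by simp [h] at h1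
  refine ⟨?_, by positivity⟩
  convert hlim.congr' ?_ using 2
  · simp [abs_of_pos pi_pos, div_div]
  · filter_upwards [self_mem_nhdsWithin] with r hr
    rw [norm_mul, norm_cpow_eq_rpow_re_of_pos hr.1]
    simp
end

section
/- Let z ∈ ℂ with 0 < Re z < 1. For r > 0 set A_l(r) = ∫_{φ = -π/4}^{3π/4} f_l(r·exp(iφ))·(i·r·exp(iφ)) dφ, the integral of f_l along the circular arc of radius r centered at the origin between angles -π/4 and 3π/4. Then r^(Re z)·‖A_l(r)‖ tends to ‖exp(iπz/4) - exp(-3iπz/4)‖/(2π·‖z‖) as r → 0⁺, and this limit is positive (since exp(iπz) ≠ 1 for 0 < Re z < 1); so the arc integral diverges like r^(-Re z) as r → 0. -/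
open Filter

/-- The integral of `f_l` along the circular arc of radius `r` centered at the
origin between angles `-π/4` and `3π/4`. -/
noncomputable def arcL (z : ℂ) (r : ℝ) : ℂ :=
  ∫ φ in (-(Real.pi / 4))..(3 * Real.pi / 4),
    fl z (r * Complex.exp (φ * Complex.I)) * (Complex.I * r * Complex.exp (φ * Complex.I))

/-!
On the arc `w = r·e^{iφ}`, `φ ∈ [-π/4, 3π/4] ⊆ (-π, π]`, the principal power satisfies
`r^z·w^(-z) = e^{-izφ}`, so `r^z·A_l(r) = ∫ e^{-izφ}·g(r·e^{iφ}) dφ`, where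
`g(w) = i·w·e^{-πiw²}/(e^{πiw} - e^{-πiw})` (`flReg`) has a removable singularity at `0`
with `g(0) = 1/(2π)`. Dominated convergence gives `r^z·A_l(r) → (2π)⁻¹·∫ e^{-izφ} dφ`,
an elementary integral. The limit is nonzero because `e^{iπz} ≠ 1` when `0 < Re z < 2`.
-/

open scoped Real Topology
open Complex MeasureTheory

theorem Complex.ofReal_mul_exp_mul_I_cpow {r φ : ℝ} (hr : 0 < r)
    (hφ : φ ∈ Set.Ioc (-π) π) (s : ℂ) :
    ((r : ℂ) * exp (φ * I)) ^ s = (r : ℂ) ^ s * exp (s * (φ * I)) := by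
  have hpolar : (r : ℂ) * exp (φ * I) = exp (Real.log r + φ * I) := by
    rw [exp_add, ofReal_log hr.le, exp_log (ofReal_ne_zero.2 hr.ne')]
  rw [hpolar, cpow_def_of_ne_zero (exp_ne_zero _),
    log_exp (by simpa using hφ.1) (by simpa using hφ.2),
    cpow_def_of_ne_zero (ofReal_ne_zero.2 hr.ne'), ← ofReal_log hr.le, ← exp_add]
  ring_nf

theorem tendsto_intervalIntegral_mul_comp_circle {g : ℂ → ℂ} {c : ℝ → ℂ} {a b : ℝ}
    (hc : IntervalIntegrable c volume a b) (hg : ContinuousAt g 0) (hgm : Measurable g) :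
    Tendsto (fun r : ℝ => ∫ φ in a..b, c φ * g (r * exp (φ * I))) (𝓝 0)
      (𝓝 ((∫ φ in a..b, c φ) * g 0)) := by
  have hpoint (φ : ℝ) : Tendsto (fun r : ℝ => (r : ℂ) * exp (φ * I)) (𝓝 0) (𝓝 0) := by
    simpa using (show Continuous fun r : ℝ => (r : ℂ) * exp (φ * I) by fun_prop).tendsto 0
  have hbound : ∀ᶠ r : ℝ in 𝓝 0, ∀ φ : ℝ, ‖g (r * exp (φ * I))‖ ≤ ‖g 0‖ + 1 := by
    obtain ⟨δ, hδ, hball⟩ := Metric.eventually_nhds_iff.1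
      (hg.norm.eventually (gt_mem_nhds (lt_add_one ‖g 0‖)))
    filter_upwards [Metric.ball_mem_nhds 0 hδ] with r hr φ
    refine (hball ?_).le
    simpa [norm_mul, norm_exp_ofReal_mul_I] using hr
  rw [← intervalIntegral.integral_mul_const]
  refine intervalIntegral.tendsto_integral_filter_of_dominated_convergence
    (fun φ => ‖c φ‖ * (‖g 0‖ + 1)) (.of_forall fun r => ?_) ?_ (hc.norm.mul_const _)
    (.of_forall fun φ _ => tendsto_const_nhds.mul ((hg.tendsto.comp (hpoint φ))))
  · exact hc.def'.aestronglyMeasurable.mul (hgm.comp (by fun_prop)).aestronglyMeasurable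
  · filter_upwards [hbound] with r hr
    exact .of_forall fun φ _ => by
      rw [norm_mul]; exact mul_le_mul_of_nonneg_left (hr φ) (norm_nonneg _)

noncomputable def flDenom (w : ℂ) : ℂ :=
  exp (π * I * w) - exp (-(π * I) * w)

/-- `i·w·fl z w / w^(-z)`, with its removable singularity at `0` filled in by `dslope`. -/
noncomputable def flReg (w : ℂ) : ℂ :=
  I * exp (-(π * I) * w ^ 2) / dslope flDenom 0 w

theorem flDenom_zero : flDenom 0 = 0 := by simp [flDenom]

theorem hasDerivAt_flDenom (w : ℂ) :
    HasDerivAt flDenom (π * I * exp (π * I * w) + π * I * exp (-(π * I) * w)) w := by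
  refine (((hasDerivAt_id' w).const_mul (π * I : ℂ)).cexp.fun_sub
    ((hasDerivAt_id' w).const_mul (-(π * I) : ℂ)).cexp).congr_deriv ?_
  ring

theorem dslope_flDenom_zero : dslope flDenom 0 0 = 2 * π * I := by
  rw [dslope_same, (hasDerivAt_flDenom 0).deriv]
  simp
  ring

theorem continuous_dslope_flDenom : Continuous (dslope flDenom 0) :=
  continuousOn_univ.1 <| (continuousOn_dslope Filter.univ_mem).2
    ⟨fun w _ => (hasDerivAt_flDenom w).continuousAt.continuousWithinAt,
      (hasDerivAt_flDenom 0).differentiableAt⟩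

theorem flReg_zero : flReg 0 = (2 * π : ℂ)⁻¹ := by
  rw [flReg, dslope_flDenom_zero]
  simp
  field_simp

theorem continuousAt_flReg_zero : ContinuousAt flReg 0 := by
  refine (continuous_const.mul (by fun_prop)).continuousAt.div
    continuous_dslope_flDenom.continuousAt ?_
  rw [dslope_flDenom_zero]
  simp [Real.pi_ne_zero]

theorem measurable_flReg : Measurable flReg :=
  (measurable_const.mul (by fun_prop)).div continuous_dslope_flDenom.measurable

theorem fl_mul_I_mul {w : ℂ} (hw : w ≠ 0) (z : ℂ) :
    fl z w * (I * w) = w ^ (-z) * flReg w := by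
  rw [fl, flReg, dslope_of_ne _ hw, slope_def_field, flDenom_zero, sub_zero, sub_zero, flDenom]
  -- at a zero of the denominator both sides are junk `x / 0 = 0`
  rcases eq_or_ne (exp (π * I * w) - exp (-(π * I) * w)) 0 with h | h
  · rw [h]
    simp
  · field_simp

theorem ofReal_cpow_mul_arcL (z : ℂ) {r : ℝ} (hr : 0 < r) :
    (r : ℂ) ^ z * arcL z r = ∫ φ in (-(π / 4))..(3 * π / 4),
      exp (-(z * I) * φ) * flReg (r * exp (φ * I)) := by
  rw [arcL, ← intervalIntegral.integral_const_mul]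
  refine intervalIntegral.integral_congr fun φ hφ => ?_
  rw [Set.uIcc_of_le (by linarith [Real.pi_pos])] at hφ
  have hφ' : φ ∈ Set.Ioc (-π) π :=
    ⟨by linarith [Real.pi_pos, hφ.1], by linarith [Real.pi_pos, hφ.2]⟩
  have hw : (r : ℂ) * exp (φ * I) ≠ 0 := mul_ne_zero (ofReal_ne_zero.2 hr.ne') (exp_ne_zero _)
  rw [show I * r * exp (φ * I) = I * (r * exp (φ * I)) by ring, fl_mul_I_mul hw,
    ofReal_mul_exp_mul_I_cpow hr hφ', ← mul_assoc, ← mul_assoc,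
    ← cpow_add _ _ (ofReal_ne_zero.2 hr.ne'), add_neg_cancel, cpow_zero, one_mul]
  ring_nf

theorem integral_exp_neg_mul_I {z : ℂ} (hz : z ≠ 0) :
    ∫ φ in (-(π / 4))..(3 * π / 4), exp (-(z * I) * φ) =
      (exp (I * π * z / 4) - exp (-(3 * I * π * z) / 4)) / (z * I) := by
  rw [integral_exp_mul_complex (by simp [hz]), div_eq_div_iff (by simp [hz]) (by simp [hz])]
  push_cast
  ring_nf

theorem exp_pi_mul_I_mul_ne_one {z : ℂ} (h0 : 0 < z.re) (h2 : z.re < 2) :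
    exp (π * I * z) ≠ 1 := by
  rw [Ne, exp_eq_one_iff]
  rintro ⟨n, hn⟩
  have hz : z = 2 * n := mul_left_cancel₀ (by simp [Real.pi_ne_zero] : (π * I : ℂ) ≠ 0)
    (by linear_combination hn)
  have hre : z.re = 2 * n := by simp [hz]
  have hn0 : (0 : ℤ) < n := by exact_mod_cast (by linarith : (0 : ℝ) < n)
  have hn1 : n < 1 := by exact_mod_cast (by linarith : (n : ℝ) < 1)
  omega

theorem tendsto_ofReal_cpow_mul_arcL {z : ℂ} (hz : z ≠ 0) :
    Tendsto (fun r : ℝ => (r : ℂ) ^ z * arcL z r) (𝓝[>] 0)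
      (𝓝 ((exp (I * π * z / 4) - exp (-(3 * I * π * z) / 4)) / (2 * π * z * I))) := by
  have h := (tendsto_intervalIntegral_mul_comp_circle (a := -(π / 4)) (b := 3 * π / 4)
    ((by fun_prop : Continuous fun φ : ℝ => exp (-(z * I) * φ)).intervalIntegrable _ _)
    continuousAt_flReg_zero measurable_flReg).mono_left (nhdsWithin_le_nhds (s := Set.Ioi 0))
  rw [integral_exp_neg_mul_I hz, flReg_zero] at h
  convert h.congr' ?_ using 2
  · field_simp
  · filter_upwards [self_mem_nhdsWithin] with r hr
    exact (ofReal_cpow_mul_arcL z hr).symm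

/-- Paper's Lemma 3.2 (left arc C̃_lc): the arc integral of `f_l` diverges like
`r^(-Re z)` as `r → 0⁺`; more precisely `r^(Re z)·‖A_l(r)‖` tends to
`‖exp(iπz/4) - exp(-3iπz/4)‖/(2π‖z‖)`, a positive limit. -/
theorem fl_arc_singularity (z : ℂ) (h0 : 0 < z.re) (h1 : z.re < 1) :
    Tendsto (fun r : ℝ => r ^ z.re * ‖arcL z r‖)
      (nhdsWithin 0 (Set.Ioi 0))
      (nhds (‖Complex.exp (Complex.I * Real.pi * z / 4) -
          Complex.exp (-(3 * Complex.I * Real.pi * z) / 4)‖ / (2 * Real.pi * ‖z‖))) ∧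
    0 < ‖Complex.exp (Complex.I * Real.pi * z / 4) -
          Complex.exp (-(3 * Complex.I * Real.pi * z) / 4)‖ / (2 * Real.pi * ‖z‖) := by
  have hz : z ≠ 0 := fun h => by simp [h] at h0
  have hnum : exp (I * π * z / 4) - exp (-(3 * I * π * z) / 4) ≠ 0 := by
    refine sub_ne_zero.2 fun h => exp_pi_mul_I_mul_ne_one h0 (by linarith) ?_
    rw [show (π * I * z : ℂ) = I * π * z / 4 - -(3 * I * π * z) / 4 by ring,
      exp_sub, h, div_self (exp_ne_zero _)]
  refine ⟨?_, div_pos (norm_pos_iff.2 hnum) (by positivity)⟩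
  convert (tendsto_ofReal_cpow_mul_arcL hz).norm.congr' ?_ using 2
  · simp [abs_of_pos Real.pi_pos]
  · filter_upwards [self_mem_nhdsWithin] with r hr
    rw [norm_mul, norm_cpow_eq_rpow_re_of_pos hr]
end
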